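/- arXiv:1902.07024 — 2 statements merged into one kernel-verified Lean document; each statement's English description precedes it below -/
import Mathlib

section
/- Let A ∈ C^{n×n×p} and let f be a function defined on the spectrum of bcirc(A). If bcirc(A) = (F_p^H ⊗ I_n) diag(A₁,...,A_p) (F_p ⊗ I_n), then the tensor T-function satisfies f(A) = bcirc^{-1}( (F_p^H ⊗ I_n) diag(f(A₁),...,f(A_p)) (F_p ⊗ I_n) ); equivalently bcirc(f(A)) = f(bcirc(A)). -/
open Matrix Kronecker Complex Polynomial

noncomputable section

/-- Block circulant matrix of a third-order tensor given by its frontal slices. -/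
def bcirc {m n p : ℕ} (A : Fin p → Matrix (Fin m) (Fin n) ℂ) :
    Matrix (Fin p × Fin m) (Fin p × Fin n) ℂ :=
  Matrix.of fun jr kc => A (jr.1 - kc.1) jr.2 kc.2

/-- The tensor T-product. -/
def tmul {m n s p : ℕ} (A : Fin p → Matrix (Fin m) (Fin n) ℂ)
    (B : Fin p → Matrix (Fin n) (Fin s) ℂ) : Fin p → Matrix (Fin m) (Fin s) ℂ :=
  fun i => ∑ j : Fin p, A (i - j) * B j

/-- The identity tensor. -/
def tId {n p : ℕ} [NeZero p] : Fin p → Matrix (Fin n) (Fin n) ℂ :=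
  fun i => if i = 0 then 1 else 0

/-- T-product powers of a tensor. -/
def tpow {n p : ℕ} [NeZero p] (A : Fin p → Matrix (Fin n) (Fin n) ℂ) : ℕ → Fin p → Matrix (Fin n) (Fin n) ℂ
  | 0 => tId
  | k + 1 => tmul (tpow A k) A

/-- Conjugate transpose of a tensor. -/
def tconjT {m n p : ℕ} [NeZero p] (A : Fin p → Matrix (Fin m) (Fin n) ℂ) :
    Fin p → Matrix (Fin n) (Fin m) ℂ :=
  fun i => (A (-i))ᴴ

/-- Invertibility with respect to the T-product. -/
def TInvertible {n p : ℕ} [NeZero p] (A : Fin p → Matrix (Fin n) (Fin n) ℂ) : Prop :=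
  ∃ B, tmul A B = tId ∧ tmul B A = tId

/-- `fold` of an `np × n` matrix back into a tensor (first block column). -/
def tfold {n p : ℕ} [NeZero p] (M : Matrix (Fin p × Fin n) (Fin p × Fin n) ℂ) :
    Fin p → Matrix (Fin n) (Fin n) ℂ :=
  fun i => Matrix.of fun r c => M (i, r) ((0 : Fin p), c)

/-- The primitive root ω = e^{-2πi/p}. -/
def tomega (p : ℕ) : ℂ := Complex.exp (-2 * Real.pi * Complex.I / p)

/-- The (unitary) discrete Fourier matrix. -/
def fourierMat (p : ℕ) : Matrix (Fin p) (Fin p) ℂ :=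
  Matrix.of fun j k => tomega p ^ ((j : ℕ) * (k : ℕ)) / Real.sqrt p

/-- Block diagonal matrix with `p` diagonal blocks of size `n × n`. -/
def bdiag {n p : ℕ} (B : Fin p → Matrix (Fin n) (Fin n) ℂ) :
    Matrix (Fin p × Fin n) (Fin p × Fin n) ℂ :=
  Matrix.of fun jr kc => if jr.1 = kc.1 then B jr.1 jr.2 kc.2 else 0


/-- The tensor T-function induced by a scalar polynomial (by Hermite interpolation,
a function defined on the spectrum of `bcirc A` acts as a polynomial):
`f(A) = fold (f(bcirc A) · Ê₁)`. -/
def tfun {n p : ℕ} [NeZero p] (q : Polynomial ℂ)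
    (A : Fin p → Matrix (Fin n) (Fin n) ℂ) : Fin p → Matrix (Fin n) (Fin n) ℂ :=
  tfold (Polynomial.aeval (bcirc A) q)

/-! Block circulant matrices, those whose `(i, k)` block depends only on `i - k`, form a
subalgebra; hence `q(bcirc A)` is block circulant and is therefore `bcirc` of its own first
block column, which is `tfun q A`. Polynomial evaluation commutes with conjugation by a unit
and with the algebra map `bdiag`, which transports `q` through the block Fourier
diagonalization. -/

theorem tomega_isPrimitiveRoot (p : ℕ) [NeZero p] : IsPrimitiveRoot (tomega p) p := by
  have h : tomega p = (Complex.exp (2 * Real.pi * Complex.I / p))⁻¹ := by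
    rw [← Complex.exp_neg, tomega]; ring_nf
  exact h ▸ (Complex.isPrimitiveRoot_exp p (NeZero.ne p)).inv

theorem star_tomega (p : ℕ) : star (tomega p) = (tomega p)⁻¹ := by
  rw [tomega, Complex.star_def, ← Complex.exp_conj, ← Complex.exp_neg]
  congr 1
  simp [map_div₀, Complex.conj_I, map_ofNat]
  ring

theorem sum_fin_pow_of_pow_eq_one {K : Type*} [DivisionRing K] [DecidableEq K] {x : K} {p : ℕ}
    (hx : x ^ p = 1) : ∑ l : Fin p, x ^ (l : ℕ) = if x = 1 then (p : K) else 0 := by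
  rw [Fin.sum_univ_eq_sum_range (x ^ ·)]
  split_ifs with h
  · simp [h]
  · rw [geom_sum_eq h, hx, sub_self, zero_div]

theorem fourierMat_mul_conjTranspose (p : ℕ) [NeZero p] :
    fourierMat p * (fourierMat p)ᴴ = 1 := by
  have hω := tomega_isPrimitiveRoot p
  have hω0 : tomega p ≠ 0 := hω.ne_zero (NeZero.ne p)
  have hp : (p : ℂ) ≠ 0 := Nat.cast_ne_zero.mpr (NeZero.ne p)
  ext j k
  have entry : (fourierMat p * (fourierMat p)ᴴ) j k =
      (∑ l : Fin p, (tomega p ^ (j : ℕ) / tomega p ^ (k : ℕ)) ^ (l : ℕ)) / p := by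
    simp only [mul_apply, fourierMat, conjTranspose_apply, of_apply, star_div₀, star_pow,
      star_tomega, Complex.star_def, Complex.conj_ofReal, Finset.sum_div]
    refine Finset.sum_congr rfl fun l _ => ?_
    have hsqrt : ((Real.sqrt p : ℝ) : ℂ) * (Real.sqrt p : ℂ) = p := by
      exact_mod_cast Real.mul_self_sqrt (Nat.cast_nonneg p)
    rw [div_mul_div_comm, hsqrt]
    ring
  have hpow : (tomega p ^ (j : ℕ) / tomega p ^ (k : ℕ)) ^ p = 1 := by
    rw [div_pow, ← pow_mul, ← pow_mul, pow_mul', pow_mul', hω.pow_eq_one, one_pow, one_pow,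
      div_one]
  have hone : tomega p ^ (j : ℕ) / tomega p ^ (k : ℕ) = 1 ↔ j = k := by
    rw [div_eq_one_iff_eq (pow_ne_zero _ hω0)]
    exact ⟨fun h => Fin.ext (hω.pow_inj j.isLt k.isLt h), fun h => h ▸ rfl⟩
  rw [entry, sum_fin_pow_of_pow_eq_one hpow, one_apply]
  simp only [hone]
  split_ifs <;> simp [hp]

theorem aeval_units_conj {R A : Type*} [CommSemiring R] [Semiring A] [Algebra R A]
    (u : Aˣ) (x : A) (q : R[X]) : aeval (↑u * x * ↑u⁻¹) q = ↑u * aeval x q * ↑u⁻¹ :=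
  aeval_smul q (ConjAct.toConjAct u) x

theorem bdiag_eq_reindex_blockDiagonal {n p : ℕ} (B : Fin p → Matrix (Fin n) (Fin n) ℂ) :
    bdiag B = reindex (Equiv.prodComm _ _) (Equiv.prodComm _ _) (blockDiagonal B) := by
  ext ⟨j, r⟩ ⟨k, c⟩
  simp [bdiag, blockDiagonal_apply]

def bdiagAlgHom (n p : ℕ) :
    (Fin p → Matrix (Fin n) (Fin n) ℂ) →ₐ[ℂ] Matrix (Fin p × Fin n) (Fin p × Fin n) ℂ
    where
  __ := (reindexAlgEquiv ℂ ℂ (Equiv.prodComm (Fin n) (Fin p))).toRingHom.comp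
    (blockDiagonalRingHom (Fin n) (Fin p) ℂ)
  commutes' c := by
    ext ⟨j, r⟩ ⟨k, s⟩
    by_cases j = k <;> simp [algebraMap_matrix_apply, blockDiagonal_apply, Prod.ext_iff, *]

theorem bdiagAlgHom_apply {n p : ℕ} (B : Fin p → Matrix (Fin n) (Fin n) ℂ) :
    bdiagAlgHom n p B = bdiag B :=
  (bdiag_eq_reindex_blockDiagonal B).symm

theorem aeval_bdiag {n p : ℕ} (B : Fin p → Matrix (Fin n) (Fin n) ℂ) (q : ℂ[X]) :
    aeval (bdiag B) q = bdiag fun i => aeval (B i) q := by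
  rw [← bdiagAlgHom_apply, aeval_algHom_apply, aeval_pi_apply, bdiagAlgHom_apply]

variable (R m : Type*) [CommSemiring R] [Fintype m] [DecidableEq m] (p : ℕ) [NeZero p] in
def blockCirculant : Subalgebra R (Matrix (Fin p × m) (Fin p × m) R) where
  carrier := {M | ∀ i k r c, M (i, r) (k, c) = M (i - k, r) (0, c)}
  mul_mem' {M N} hM hN i k r c := by
    simp only [mul_apply, Fintype.sum_prod_type]
    refine Fintype.sum_equiv (Equiv.subRight k) _ _ fun l => Finset.sum_congr rfl fun s _ => ?_
    rw [Equiv.subRight_apply, hM i l, hN l k, hM (i - k) (l - k), hN (l - k) 0,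
      sub_sub_sub_cancel_right, sub_zero]
  add_mem' {M N} hM hN i k r c := by
    simp only [Matrix.add_apply, hM i k r c, hN i k r c]
  algebraMap_mem' a i k r c := by
    simp [algebraMap_matrix_apply, Prod.ext_iff, sub_eq_zero]

theorem bcirc_mem_blockCirculant {n p : ℕ} [NeZero p] (A : Fin p → Matrix (Fin n) (Fin n) ℂ) :
    bcirc A ∈ blockCirculant ℂ (Fin n) p := by
  intro i k r c
  simp [bcirc]

theorem bcirc_tfold_of_mem {n p : ℕ} [NeZero p] {M : Matrix (Fin p × Fin n) (Fin p × Fin n) ℂ}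
    (hM : M ∈ blockCirculant ℂ (Fin n) p) : bcirc (tfold M) = M := by
  ext ⟨j, r⟩ ⟨k, c⟩
  rw [hM j k r c]
  simp [bcirc, tfold]

theorem bcirc_tfun_eq_aeval {n p : ℕ} [NeZero p] (A : Fin p → Matrix (Fin n) (Fin n) ℂ)
    (q : ℂ[X]) : bcirc (tfun q A) = aeval (bcirc A) q :=
  bcirc_tfold_of_mem <|
    coe_aeval_mk_apply (p := q) _ (bcirc_mem_blockCirculant A) ▸ SetLike.coe_mem _

/-- `bcirc (f(A)) = f (bcirc A)`, and the T-function is computed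
blockwise in the Fourier block diagonalization. -/
theorem bcirc_tfun {n p : ℕ} [NeZero p]
    (A D : Fin p → Matrix (Fin n) (Fin n) ℂ)
    (h : bcirc A = ((fourierMat p)ᴴ ⊗ₖ (1 : Matrix (Fin n) (Fin n) ℂ)) * bdiag D *
        (fourierMat p ⊗ₖ (1 : Matrix (Fin n) (Fin n) ℂ)))
    (q : Polynomial ℂ) :
    bcirc (tfun q A) = ((fourierMat p)ᴴ ⊗ₖ (1 : Matrix (Fin n) (Fin n) ℂ)) *
        bdiag (fun i => Polynomial.aeval (D i) q) *
        (fourierMat p ⊗ₖ (1 : Matrix (Fin n) (Fin n) ℂ)) ∧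
      bcirc (tfun q A) = Polynomial.aeval (bcirc A) q := by
  have hunit : (fourierMat p ⊗ₖ (1 : Matrix (Fin n) (Fin n) ℂ)) *
      ((fourierMat p)ᴴ ⊗ₖ (1 : Matrix (Fin n) (Fin n) ℂ)) = 1 := by
    rw [← mul_kronecker_mul, fourierMat_mul_conjTranspose, mul_one, one_kronecker_one]
  let U : (Matrix (Fin p × Fin n) (Fin p × Fin n) ℂ)ˣ :=
    ⟨_, _, mul_eq_one_comm.mp hunit, hunit⟩
  refine ⟨?_, bcirc_tfun_eq_aeval A q⟩
  rw [bcirc_tfun_eq_aeval, h, ← aeval_bdiag]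
  exact aeval_units_conj U (bdiag D) q

end
end

section
/- Let A ∈ C^{n×n×p} and let f be defined on the spectrum of bcirc(A). Then the T-function commutes with A: f(A) * A = A * f(A); it respects conjugate transposition: f(A^H) = f(A)^H (for f with suitable conjugate-symmetry, e.g. f a polynomial with real coefficients); and it respects similarity: f(X * A * X^{-1}) = X * f(A) * X^{-1} for any invertible tensor X ∈ C^{n×n×p}. -/
/-!
`bcirc` is injective (`tfold` undoes it) and turns the T-product into the matrix product, so the
block circulant matrices form a subalgebra and `bcirc (f(A)) = f(bcirc A)`. Each identity thus
reduces to a matrix fact: a polynomial in `M` commutes with `M`, real polynomials commute with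
`ᴴ`, and polynomials commute with conjugation by an invertible matrix.
-/

open Matrix Kronecker Complex Polynomial

noncomputable section

section BlockCirculant

variable {m n s p : ℕ}

theorem tfold_bcirc [NeZero p] (A : Fin p → Matrix (Fin n) (Fin n) ℂ) : tfold (bcirc A) = A := by
  funext i
  ext r c
  simp [tfold, bcirc]

theorem bcirc_injective [NeZero p] :
    Function.Injective (bcirc : (Fin p → Matrix (Fin n) (Fin n) ℂ) → _) :=
  Function.LeftInverse.injective tfold_bcirc

theorem bcirc_add (A B : Fin p → Matrix (Fin m) (Fin n) ℂ) :
    bcirc (A + B) = bcirc A + bcirc B := by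
  ext ⟨i, r⟩ ⟨k, c⟩
  simp [bcirc]

theorem bcirc_smul (a : ℂ) (A : Fin p → Matrix (Fin m) (Fin n) ℂ) :
    bcirc (a • A) = a • bcirc A := by
  ext ⟨i, r⟩ ⟨k, c⟩
  simp [bcirc]

theorem bcirc_tmul [NeZero p] (A : Fin p → Matrix (Fin m) (Fin n) ℂ)
    (B : Fin p → Matrix (Fin n) (Fin s) ℂ) :
    bcirc (tmul A B) = bcirc A * bcirc B := by
  ext ⟨i, r⟩ ⟨k, c⟩
  simp only [bcirc, tmul, Matrix.mul_apply, Matrix.of_apply, Matrix.sum_apply,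
    Fintype.sum_prod_type]
  refine Fintype.sum_equiv (Equiv.addRight k) _ _ fun j => ?_
  simp only [Equiv.coe_addRight, add_sub_cancel_right, sub_sub, add_comm k j]

theorem bcirc_tId [NeZero p] : bcirc (tId : Fin p → Matrix (Fin n) (Fin n) ℂ) = 1 := by
  ext ⟨i, r⟩ ⟨k, c⟩
  by_cases h : i = k <;> simp [bcirc, tId, Matrix.one_apply, h, sub_eq_zero]

theorem bcirc_tconjT [NeZero p] (A : Fin p → Matrix (Fin m) (Fin n) ℂ) :
    bcirc (tconjT A) = (bcirc A)ᴴ := by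
  ext ⟨i, r⟩ ⟨k, c⟩
  simp [bcirc, tconjT]

variable (n p) in
def bcircSubalgebra [NeZero p] : Subalgebra ℂ (Matrix (Fin p × Fin n) (Fin p × Fin n) ℂ) where
  carrier := Set.range bcirc
  mul_mem' := by
    rintro _ _ ⟨A, rfl⟩ ⟨B, rfl⟩
    exact ⟨tmul A B, bcirc_tmul A B⟩
  add_mem' := by
    rintro _ _ ⟨A, rfl⟩ ⟨B, rfl⟩
    exact ⟨A + B, bcirc_add A B⟩
  algebraMap_mem' a := ⟨a • tId, by rw [bcirc_smul, bcirc_tId, Algebra.algebraMap_eq_smul_one]⟩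

theorem bcirc_tfun_s7 [NeZero p] (q : ℂ[X]) (A : Fin p → Matrix (Fin n) (Fin n) ℂ) :
    bcirc (tfun q A) = aeval (bcirc A) q := by
  have hA : bcirc A ∈ bcircSubalgebra n p := ⟨A, rfl⟩
  obtain ⟨B, hB⟩ : aeval (bcirc A) q ∈ bcircSubalgebra n p :=
    coe_aeval_mk_apply (p := q) _ hA ▸ SetLike.coe_mem _
  rw [tfun, ← hB, tfold_bcirc]

end BlockCirculant

theorem Matrix.conjTranspose_aeval {ι R α : Type*} [Fintype ι] [DecidableEq ι] [CommSemiring R]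
    [StarRing R] [TrivialStar R] [Semiring α] [StarRing α] [Algebra R α] [StarModule R α]
    (M : Matrix ι ι α) (q : R[X]) : (aeval M q)ᴴ = aeval Mᴴ q := by
  have h := aeval_algHom_apply (conjTransposeAlgEquiv ι (R := R) α) M q
  simp only [conjTransposeAlgEquiv_apply, aeval_op_apply] at h
  exact MulOpposite.op_injective h.symm

theorem aeval_mul_mul_of_mul_eq_one {R A : Type*} [CommSemiring R] [Semiring A] [Algebra R A]
    {U V : A} (hUV : U * V = 1) (hVU : V * U = 1) (M : A) (q : R[X]) :
    aeval (U * M * V) q = U * aeval M q * V :=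
  aeval_smul q (ConjAct.toConjAct (⟨U, V, hUV, hVU⟩ : Aˣ)) M

/-- the T-function commutes with `A`, respects conjugate
transposition (for real-coefficient polynomials), and respects T-similarity. -/
theorem tfun_commute_conjTranspose_similarity {n p : ℕ} [NeZero p]
    (A : Fin p → Matrix (Fin n) (Fin n) ℂ) (q : Polynomial ℂ) :
    tmul (tfun q A) A = tmul A (tfun q A) ∧
      (∀ q₀ : Polynomial ℝ,
        tfun (q₀.map (algebraMap ℝ ℂ)) (tconjT A) =
          tconjT (tfun (q₀.map (algebraMap ℝ ℂ)) A)) ∧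
      (∀ X Y : Fin p → Matrix (Fin n) (Fin n) ℂ,
        tmul X Y = tId → tmul Y X = tId →
        tfun q (tmul (tmul X A) Y) = tmul (tmul X (tfun q A)) Y) := by
  refine ⟨?_, fun q₀ => ?_, fun X Y hXY hYX => ?_⟩
  · apply bcirc_injective
    rw [bcirc_tmul, bcirc_tmul, bcirc_tfun_s7]
    simpa only [aeval_X] using ((Commute.all q X).map (aeval (bcirc A))).eq
  · apply bcirc_injective
    rw [bcirc_tconjT, bcirc_tfun_s7, bcirc_tfun_s7, bcirc_tconjT, aeval_map_algebraMap,
      aeval_map_algebraMap, conjTranspose_aeval]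
  · have hbXY : bcirc X * bcirc Y = 1 := by rw [← bcirc_tmul, hXY, bcirc_tId]
    have hbYX : bcirc Y * bcirc X = 1 := by rw [← bcirc_tmul, hYX, bcirc_tId]
    apply bcirc_injective
    rw [bcirc_tfun_s7, bcirc_tmul, bcirc_tmul, bcirc_tmul, bcirc_tmul, bcirc_tfun_s7,
      aeval_mul_mul_of_mul_eq_one hbXY hbYX]
end
end
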